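/- arXiv:1104.1097 — 2 statements merged into one kernel-verified Lean document; each statement's English description precedes it below -/
import Mathlib

section
/- Let n > 1 and let D be a set of proper divisors of n with greatest common divisor 1, so that the integral circulant graph ICG_n(D) is connected. Then every eigenvalue of the distance matrix of ICG_n(D) is an integer. -/
open scoped Classical

/-- The integral circulant graph `ICG_n(D)`: vertices `0,…,n-1` (as `ZMod n`), with `a ~ b` iff
`gcd(a-b, n) ∈ D`. -/
def ICG (n : ℕ) (D : Finset ℕ) : SimpleGraph (ZMod n) where
  Adj a b := a ≠ b ∧ Int.gcd ((a.val : ℤ) - (b.val : ℤ)) n ∈ D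
  symm := by
    constructor
    rintro a b ⟨hne, h⟩
    refine ⟨hne.symm, ?_⟩
    rwa [show ((b.val : ℤ) - a.val) = -((a.val : ℤ) - b.val) by ring, Int.neg_gcd]
  loopless := by constructor; rintro a ⟨h, -⟩; exact h rfl

/-- The distance matrix of a graph. -/
noncomputable def distMatrix {V : Type} [Fintype V] (G : SimpleGraph V) : Matrix V V ℝ :=
  Matrix.of fun i j => (G.dist i j : ℝ)

/-- The distance energy: the sum of the absolute values of the eigenvalues (with multiplicity)
of the distance matrix, i.e. of the roots of its characteristic polynomial. -/
noncomputable def distEnergy {V : Type} [Fintype V] [DecidableEq V] (G : SimpleGraph V) : ℝ :=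
  ((distMatrix G).charpoly.roots.map fun x => |x|).sum

/-!
Translations and multiplications by units of `ZMod n` are automorphisms of `ICG n D`, so the
distance matrix is the circulant of `x ↦ d(0, x)` and `d(0, x)` depends only on `gcd(x, n)`.
Eigenvalues of a circulant are values of the discrete Fourier transform of its symbol. By Möbius
inversion over the divisors of `n`, a function of `gcd(x, n)` is an integer combination of the
indicators of the subgroups `eℤ/nℤ` (`e ∣ n`), whose Fourier transforms are geometric sums of an
`(n / e)`-th root of unity, hence `n / e` or `0`.
-/

open Finset Matrix ZMod

theorem SimpleGraph.Iso.dist_map {V W : Type*} {G : SimpleGraph V} {G' : SimpleGraph W}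
    (f : G ≃g G') (u v : V) : G'.dist (f u) (f v) = G.dist u v := by
  rw [SimpleGraph.dist_eq_sInf, SimpleGraph.dist_eq_sInf]
  congr 1
  ext L
  constructor
  · rintro ⟨q, rfl⟩
    exact ⟨(q.map f.symm.toHom).copy (by simp) (by simp), by simp⟩
  · rintro ⟨p, rfl⟩
    exact ⟨p.map f.toHom, by simp⟩

theorem Nat.exists_sum_divisors_ite_dvd_eq_comp_gcd {R : Type*} [AddCommGroup R] {n : ℕ}
    (hn : n ≠ 0) (F : ℕ → R) :
    ∃ G : ℕ → R, ∀ a, ∑ e ∈ n.divisors, (if e ∣ a then G e else 0) = F (a.gcd n) := by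
  obtain ⟨G, hG⟩ : ∃ G : ℕ → R, ∀ d > 0, ∑ e ∈ d.divisors, G e = F d :=
    ⟨_, (ArithmeticFunction.sum_eq_iff_sum_smul_moebius_eq (g := F)).2 fun _ _ => rfl⟩
  refine ⟨G, fun a => ?_⟩
  rw [← sum_filter, ← hG _ (Nat.gcd_pos_of_pos_right a (Nat.pos_of_ne_zero hn)),
    ← Nat.divisors_filter_dvd_of_dvd hn (Nat.gcd_dvd_right a n)]
  refine sum_congr (filter_congr fun e he => ?_) fun _ _ => rfl
  simp [Nat.dvd_gcd_iff, Nat.dvd_of_mem_divisors he]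

theorem geom_sum_mem_bot_of_pow_eq_one {K : Type*} [Field K] {ω : K} {N : ℕ} (hω : ω ^ N = 1) :
    ∑ t ∈ range N, ω ^ t ∈ (⊥ : Subring K) := by
  by_cases h1 : ω = 1
  · simp [h1]
  · rw [geom_sum_eq h1, hω, sub_self, zero_div]
    exact zero_mem _

namespace ZMod

variable {n : ℕ}

theorem gcd_val_unit_mul (u : (ZMod n)ˣ) (x : ZMod n) :
    ((u : ZMod n) * x).val.gcd n = x.val.gcd n := by
  rw [val_mul, ← Nat.gcd_rec, Nat.gcd_comm]
  exact Nat.Coprime.gcd_mul_left_cancel x.val (val_coe_unit_coprime u)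

theorem gcd_val_natCast_of_dvd {d : ℕ} (hd : d ∣ n) : (d : ZMod n).val.gcd n = d := by
  rw [val_natCast, ← Nat.gcd_rec, Nat.gcd_eq_right hd]

variable [NeZero n]

theorem sum_filter_dvd_val {M : Type*} [AddCommMonoid M] {e : ℕ} (he : e ∣ n) (g : ZMod n → M) :
    ∑ x with e ∣ x.val, g x = ∑ t ∈ range (n / e), g (e * t) := by
  have he0 : 0 < e := Nat.pos_of_dvd_of_pos he (Nat.pos_of_ne_zero (NeZero.ne n))
  have hlt {t : ℕ} : t < n / e ↔ e * t < n := Nat.lt_div_iff_mul_lt' he t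
  refine sum_nbij' (fun x => x.val / e) (fun t => (e : ZMod n) * t) ?_ ?_ ?_ ?_ ?_
  · intro x _
    exact mem_range.2 (Nat.div_lt_div_of_lt_of_dvd he x.val_lt)
  · intro t ht
    simp [← Nat.cast_mul, val_cast_of_lt (hlt.1 (mem_range.1 ht))]
  · intro x hx
    simp only [mem_filter] at hx
    simp [← Nat.cast_mul, Nat.mul_div_cancel' hx.2]
  · intro t ht
    simp [← Nat.cast_mul, val_cast_of_lt (hlt.1 (mem_range.1 ht)), he0]
  · intro x hx
    simp only [mem_filter] at hx
    simp [← Nat.cast_mul, Nat.mul_div_cancel' hx.2]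

theorem dft_circulant_mulVec (c w : ZMod n → ℂ) : 𝓕 (circulant c *ᵥ w) = 𝓕 c * 𝓕 w := by
  ext k
  simp only [dft_apply, mulVec, dotProduct, circulant_apply, smul_eq_mul, Pi.mul_apply,
    mul_sum, sum_mul]
  rw [sum_comm]
  refine sum_congr rfl fun j _ => ?_
  rw [← Equiv.sum_comp (Equiv.addRight j)]
  refine sum_congr rfl fun i _ => ?_
  simp only [Equiv.coe_addRight, add_sub_cancel_right, add_mul, neg_add, AddChar.map_add_eq_mul]
  ring

theorem exists_dft_eq_of_circulant_mulVec_eq_smul {c w : ZMod n → ℂ} {μ : ℂ} (hw : w ≠ 0)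
    (h : circulant c *ᵥ w = μ • w) : ∃ k, 𝓕 c k = μ := by
  have hdft : 𝓕 c * 𝓕 w = μ • 𝓕 w := by rw [← dft_circulant_mulVec, h, LinearEquiv.map_smul]
  obtain ⟨k, hk⟩ : ∃ k, 𝓕 w k ≠ 0 := by
    by_contra! h0
    exact hw (dft.map_eq_zero_iff.1 (funext h0))
  exact ⟨k, mul_right_cancel₀ hk (congrFun hdft k)⟩

theorem exists_dft_eq_of_mem_spectrum_circulant {c : ZMod n → ℝ} {μ : ℝ}
    (hμ : μ ∈ spectrum ℝ (circulant c)) : ∃ k, 𝓕 (fun x => (c x : ℂ)) k = μ := by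
  rw [← spectrum_toLin', ← Module.End.hasEigenvalue_iff_mem_spectrum] at hμ
  obtain ⟨v, hv⟩ := hμ.exists_hasEigenvector
  refine exists_dft_eq_of_circulant_mulVec_eq_smul (w := fun x => (v x : ℂ)) ?_ ?_
  · exact fun h0 => hv.2 (funext fun x => by simpa using congrFun h0 x)
  · ext i
    have := congrFun hv.apply_eq_smul i
    simp only [toLin'_apply, mulVec, dotProduct, circulant_apply, Pi.smul_apply,
      smul_eq_mul] at this ⊢
    exact_mod_cast this

theorem dft_ite_dvd_val_mem_bot {e : ℕ} (he : e ∣ n) (k : ZMod n) :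
    𝓕 (fun x : ZMod n => if e ∣ x.val then (1 : ℂ) else 0) k ∈ (⊥ : Subring ℂ) := by
  have hsum : 𝓕 (fun x : ZMod n => if e ∣ x.val then (1 : ℂ) else 0) k
      = ∑ t ∈ range (n / e), stdAddChar (-((e : ZMod n) * k)) ^ t := by
    simp only [dft_apply, smul_eq_mul, mul_ite, mul_one, mul_zero]
    rw [← sum_filter, sum_filter_dvd_val he]
    refine sum_congr rfl fun t _ => ?_
    rw [← AddChar.map_nsmul_eq_pow, nsmul_eq_mul]
    ring_nf
  rw [hsum]
  refine geom_sum_mem_bot_of_pow_eq_one ?_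
  rw [← AddChar.map_nsmul_eq_pow, nsmul_eq_mul, mul_neg, ← mul_assoc, ← Nat.cast_mul,
    Nat.div_mul_cancel he, natCast_self, zero_mul, neg_zero, AddChar.map_zero_eq_one]

theorem dft_comp_gcd_mem_bot (F : ℕ → ℤ) (k : ZMod n) :
    𝓕 (fun x : ZMod n => (F (x.val.gcd n) : ℂ)) k ∈ (⊥ : Subring ℂ) := by
  obtain ⟨G, hG⟩ := Nat.exists_sum_divisors_ite_dvd_eq_comp_gcd (NeZero.ne n) F
  have hF : (fun x : ZMod n => (F (x.val.gcd n) : ℂ))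
      = ∑ e ∈ n.divisors, (G e : ℂ) • fun x : ZMod n => if e ∣ x.val then (1 : ℂ) else 0 := by
    ext x
    simp [← hG, apply_ite]
  rw [hF, map_sum, Finset.sum_apply]
  refine Subring.sum_mem _ fun e he => ?_
  rw [LinearEquiv.map_smul, Pi.smul_apply, smul_eq_mul]
  exact Subring.mul_mem _ (intCast_mem _ _)
    (dft_ite_dvd_val_mem_bot (Nat.dvd_of_mem_divisors he) k)

end ZMod

namespace ICG

variable {n : ℕ} [NeZero n] (D : Finset ℕ)

theorem adj_iff {a b : ZMod n} : (ICG n D).Adj a b ↔ a ≠ b ∧ (a - b).val.gcd n ∈ D := by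
  have hcast : a - b = (((a.val : ℤ) - b.val : ℤ) : ZMod n) := by simp
  rw [ICG, hcast, ← Int.gcd_natCast_natCast, val_intCast, Int.gcd_emod]

def addRight (c : ZMod n) : ICG n D ≃g ICG n D where
  toEquiv := Equiv.addRight c
  map_rel_iff' {a b} := by simp [adj_iff]

def mulUnit (u : (ZMod n)ˣ) : ICG n D ≃g ICG n D where
  toEquiv := u.mulLeft
  map_rel_iff' {a b} := by simp [adj_iff, ← mul_sub, gcd_val_unit_mul]

theorem dist_eq_dist_zero_sub (a b : ZMod n) :
    (ICG n D).dist a b = (ICG n D).dist 0 (b - a) := by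
  simpa [addRight, sub_eq_add_neg] using ((addRight D (-a)).dist_map a b).symm

theorem dist_zero_unit_mul (u : (ZMod n)ˣ) (x : ZMod n) :
    (ICG n D).dist 0 (u * x) = (ICG n D).dist 0 x := by
  simpa [mulUnit] using (mulUnit D u).dist_map 0 x

theorem dist_zero_eq_dist_zero_gcd (x : ZMod n) :
    (ICG n D).dist 0 x = (ICG n D).dist 0 (x.val.gcd n : ZMod n) := by
  obtain ⟨d, hd, u, hu, rfl⟩ := eq_unit_mul_divisor x
  lift u to (ZMod n)ˣ using hu
  rw [gcd_val_unit_mul, gcd_val_natCast_of_dvd hd, dist_zero_unit_mul]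

theorem distMatrix_eq_circulant :
    distMatrix (ICG n D) = circulant fun x => ((ICG n D).dist 0 (x.val.gcd n : ZMod n) : ℝ) := by
  ext a b
  rw [distMatrix, of_apply, circulant_apply, SimpleGraph.dist_comm, dist_eq_dist_zero_sub,
    dist_zero_eq_dist_zero_gcd]

end ICG

theorem distance_spectrum_of_ICG_integral_general (n : ℕ) [NeZero n] (D : Finset ℕ) :
    ∀ μ ∈ spectrum ℝ (distMatrix (ICG n D)), ∃ z : ℤ, μ = (z : ℝ) := by
  intro μ hμ
  rw [ICG.distMatrix_eq_circulant] at hμ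
  obtain ⟨k, hk⟩ := exists_dft_eq_of_mem_spectrum_circulant hμ
  obtain ⟨z, hz⟩ := Subring.mem_bot.1 <|
    dft_comp_gcd_mem_bot (fun d => ((ICG n D).dist 0 (d : ZMod n) : ℤ)) k
  refine ⟨z, Complex.ofReal_injective ?_⟩
  rw [← hk, Complex.ofReal_intCast, hz]
  simp

/-- a connected integral circulant graph has integral distance spectrum:
every eigenvalue of its distance matrix is an integer. -/
theorem distance_spectrum_of_ICG_integral (n : ℕ) [NeZero n] (hn : 1 < n) (D : Finset ℕ)
    (hD : D.Nonempty) (hdvd : ∀ d ∈ D, d ∣ n ∧ 0 < d ∧ d < n) (hgcd : D.gcd id = 1) :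
    ∀ μ ∈ spectrum ℝ (distMatrix (ICG n D)), ∃ z : ℤ, μ = (z : ℝ) :=
  distance_spectrum_of_ICG_integral_general n D
end

section
/- Let n be an odd composite number. Then the largest eigenvalue (distance spectral radius) of the distance matrix of the unitary Cayley graph X_n equals 2(n − 1) − φ(n), where φ is Euler's totient function. -/
open scoped Classical

/-!
Since `n` is odd, every element of `ZMod n` is a sum of two units: in the local ring
`ZMod (p ^ k)`, `p` odd, one of `x - 1` and `2 - x` is a unit, and the property passes through the
Chinese remainder theorem. Hence any two distinct vertices of `X_n` have a common neighbour, so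
`X_n` has diameter at most `2`, and each row of the distance matrix sums to
`φ(n) + 2 (n - 1 - φ(n))`. The all-ones vector is then an eigenvector for this row sum, and by
Gershgorin's theorem no eigenvalue of a matrix exceeds its largest absolute row sum.
-/

open Finset

namespace Matrix

variable {ι : Type*} [Fintype ι] [DecidableEq ι]

theorem mem_spectrum_of_forall_sum_row_eq {R : Type*} [CommRing R] [Nontrivial R] [Nonempty ι]
    {A : Matrix ι ι R} {r : R} (h : ∀ i, ∑ j, A i j = r) : r ∈ spectrum R A := by
  rw [← spectrum_toLin']
  refine Module.End.HasEigenvalue.mem_spectrum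
    (Module.End.hasEigenvalue_of_hasEigenvector (x := 1) ⟨?_, one_ne_zero⟩)
  rw [Module.End.mem_eigenspace_iff, toLin'_apply]
  ext i
  simp [mulVec, dotProduct, h]

theorem abs_le_of_mem_spectrum_of_forall_sum_abs_le {A : Matrix ι ι ℝ} {r μ : ℝ}
    (h : ∀ i, ∑ j, |A i j| ≤ r) (hμ : μ ∈ spectrum ℝ A) : |μ| ≤ r := by
  rw [← spectrum_toLin', ← Module.End.hasEigenvalue_iff_mem_spectrum] at hμ
  obtain ⟨k, hk⟩ := eigenvalue_mem_ball hμ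
  rw [Metric.mem_closedBall, Real.dist_eq] at hk
  calc |μ| ≤ |A k k| + |μ - A k k| := by
        simpa using abs_add_le (A k k) (μ - A k k)
    _ ≤ |A k k| + ∑ j ∈ univ.erase k, |A k j| := by gcongr; simpa using hk
    _ = ∑ j, |A k j| := add_sum_erase _ (fun j => |A k j|) (mem_univ k)
    _ ≤ r := h k

end Matrix

namespace SimpleGraph

variable {V : Type*} {G : SimpleGraph V}

theorem dist_eq_two_of_commonNeighbors_nonempty {i j : V} (hij : i ≠ j) (hadj : ¬ G.Adj i j)
    (hc : (G.commonNeighbors i j).Nonempty) : G.dist i j = 2 := by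
  obtain ⟨c, hic, hjc⟩ := hc
  let w : G.Walk i j := .cons hic (.cons hjc.symm .nil)
  have hle : G.dist i j ≤ 2 := dist_le w
  have hpos : 0 < G.dist i j := Reachable.pos_dist_of_ne ⟨w⟩ hij
  have hne : G.dist i j ≠ 1 := fun h => hadj (dist_eq_one_iff_adj.mp h)
  omega

variable [DecidableEq V] [DecidableRel G.Adj]

theorem dist_eq_ite_of_commonNeighbors_nonempty {i : V}
    (hc : ∀ j, i ≠ j → (G.commonNeighbors i j).Nonempty) (j : V) :
    (G.dist i j : ℝ) = 2 - (if G.Adj i j then 1 else 0) - (if i = j then 2 else 0) := by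
  by_cases hij : i = j
  · subst hij
    simp
  by_cases hadj : G.Adj i j
  · norm_num [hij, hadj, dist_eq_one_iff_adj.mpr hadj]
  · simp [hij, hadj, dist_eq_two_of_commonNeighbors_nonempty hij hadj (hc j hij)]

variable [Fintype V]

theorem sum_dist_eq_of_commonNeighbors_nonempty {i : V}
    (hc : ∀ j, i ≠ j → (G.commonNeighbors i j).Nonempty) :
    ∑ j, (G.dist i j : ℝ) = 2 * (Fintype.card V - 1) - G.degree i := by
  simp only [dist_eq_ite_of_commonNeighbors_nonempty hc, sum_sub_distrib, sum_boole,
    ← neighborFinset_eq_filter, card_neighborFinset_eq_degree, sum_ite_eq, mem_univ, if_true,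
    sum_const, card_univ, nsmul_eq_mul]
  ring

end SimpleGraph

def IsTwoGood (R : Type*) [Ring R] : Prop :=
  ∀ x : R, ∃ u : R, IsUnit u ∧ IsUnit (x - u)

namespace IsTwoGood

theorem of_isLocalRing {R : Type*} [CommRing R] [IsLocalRing R] (h2 : IsUnit (2 : R)) :
    IsTwoGood R := by
  intro x
  rcases IsLocalRing.isUnit_or_isUnit_one_sub_self (x - 1) with h | h
  · exact ⟨1, isUnit_one, h⟩
  · refine ⟨2, h2, ?_⟩
    rw [← IsUnit.neg_iff]
    convert h using 1
    ring

theorem prod {R S : Type*} [Ring R] [Ring S] (hR : IsTwoGood R) (hS : IsTwoGood S) :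
    IsTwoGood (R × S) := by
  rintro ⟨x, y⟩
  obtain ⟨u, hu, hxu⟩ := hR x
  obtain ⟨v, hv, hyv⟩ := hS y
  exact ⟨(u, v), Prod.isUnit_iff.mpr ⟨hu, hv⟩, Prod.isUnit_iff.mpr ⟨hxu, hyv⟩⟩

theorem of_ringEquiv {R S : Type*} [Ring R] [Ring S] (e : R ≃+* S) (hR : IsTwoGood R) :
    IsTwoGood S := by
  intro x
  obtain ⟨u, hu, hxu⟩ := hR (e.symm x)
  refine ⟨e u, hu.map e, ?_⟩
  simpa using hxu.map e

end IsTwoGood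

namespace ZMod

theorem isLocalRing_prime_pow {p k : ℕ} [Fact p.Prime] (hk : k ≠ 0) :
    IsLocalRing (ZMod (p ^ k)) :=
  have : Fact (1 < p ^ k) := ⟨Nat.one_lt_pow hk (Fact.out : p.Prime).one_lt⟩
  IsLocalRing.of_surjective' (PadicInt.toZModPow k) (ringHom_surjective _)

theorem isUnit_two_of_odd {n : ℕ} (hn : Odd n) : IsUnit (2 : ZMod n) := by
  exact_mod_cast (isUnit_iff_coprime 2 n).mpr (Nat.coprime_two_left.mpr hn)

theorem isTwoGood_of_odd {n : ℕ} (hn : Odd n) : IsTwoGood (ZMod n) := by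
  induction n using Nat.recOnPosPrimePosCoprime with
  | prime_pow p k hp hk =>
    have : Fact p.Prime := ⟨hp⟩
    have := isLocalRing_prime_pow (p := p) hk.ne'
    exact IsTwoGood.of_isLocalRing (isUnit_two_of_odd hn)
  | zero => exact absurd hn Nat.not_odd_zero
  | one => exact fun _ => ⟨1, isUnit_one, isUnit_of_subsingleton _⟩
  | coprime a b _ _ hab iha ihb =>
    rw [Nat.odd_mul] at hn
    exact ((iha hn.1).prod (ihb hn.2)).of_ringEquiv (chineseRemainder hab).symm

theorem isUnit_intCast_iff_gcd_eq_one {n : ℕ} (x : ℤ) : IsUnit (x : ZMod n) ↔ Int.gcd x n = 1 := by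
  obtain ⟨m, rfl | rfl⟩ := Int.eq_nat_or_neg x <;>
    simp [IsUnit.neg_iff, isUnit_iff_coprime, Nat.coprime_iff_gcd_eq_one]

theorem card_filter_isUnit (n : ℕ) [NeZero n] : #{x : ZMod n | IsUnit x} = n.totient := by
  rw [← card_units_eq_totient, ← Fintype.card_subtype]
  exact Fintype.card_congr Submonoid.unitsTypeEquivIsUnitSubmonoid.toEquiv.symm

end ZMod

section UnitaryCayley

variable {n : ℕ} [NeZero n]

theorem ICG_one_adj_iff (a b : ZMod n) : (ICG n {1}).Adj a b ↔ a ≠ b ∧ IsUnit (a - b) := by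
  have hcast : (((a.val : ℤ) - b.val : ℤ) : ZMod n) = a - b := by push_cast; simp
  change a ≠ b ∧ _ ∈ ({1} : Finset ℕ) ↔ _
  rw [Finset.mem_singleton, ← ZMod.isUnit_intCast_iff_gcd_eq_one, hcast]

theorem ICG_one_adj_iff_isUnit [Nontrivial (ZMod n)] (a b : ZMod n) :
    (ICG n {1}).Adj a b ↔ IsUnit (a - b) := by
  rw [ICG_one_adj_iff, and_iff_right_of_imp fun h => sub_ne_zero.mp h.ne_zero]

theorem ICG_one_commonNeighbors_nonempty (hn : Odd n) {a b : ZMod n} (hab : a ≠ b) :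
    ((ICG n {1}).commonNeighbors a b).Nonempty := by
  have : Nontrivial (ZMod n) := nontrivial_of_ne a b hab
  obtain ⟨u, hu, hv⟩ := ZMod.isTwoGood_of_odd hn (a - b)
  refine ⟨a - u, (ICG_one_adj_iff_isUnit _ _).mpr (by simpa using hu),
    (ICG_one_adj_iff_isUnit _ _).mpr ?_⟩
  rw [← neg_sub, IsUnit.neg_iff]
  convert hv using 1
  ring

theorem ICG_one_degree (hn : 1 < n) (a : ZMod n) : (ICG n {1}).degree a = n.totient := by
  have : Fact (1 < n) := ⟨hn⟩
  rw [← SimpleGraph.card_neighborFinset_eq_degree, SimpleGraph.neighborFinset_eq_filter,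
    ← ZMod.card_filter_isUnit, ← Fintype.card_subtype, ← Fintype.card_subtype]
  exact Fintype.card_congr ((Equiv.subLeft a).subtypeEquiv (ICG_one_adj_iff_isUnit a))

theorem sum_dist_ICG_one (hn : 1 < n) (hodd : Odd n) (a : ZMod n) :
    ∑ b, distMatrix (ICG n {1}) a b = 2 * ((n : ℝ) - 1) - n.totient := by
  simp only [distMatrix, Matrix.of_apply]
  rw [SimpleGraph.sum_dist_eq_of_commonNeighbors_nonempty
    (fun _ => ICG_one_commonNeighbors_nonempty hodd), ICG_one_degree hn, ZMod.card]

end UnitaryCayley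

theorem unitaryCayley_odd_composite_spectral_radius_general (n : ℕ) [NeZero n] (hn : 1 < n)
    (hodd : Odd n) :
    (2 * ((n : ℝ) - 1) - (Nat.totient n : ℝ)) ∈ spectrum ℝ (distMatrix (ICG n {1})) ∧
    ∀ μ ∈ spectrum ℝ (distMatrix (ICG n {1})),
      μ ≤ 2 * ((n : ℝ) - 1) - (Nat.totient n : ℝ) := by
  have hrow := sum_dist_ICG_one hn hodd
  refine ⟨Matrix.mem_spectrum_of_forall_sum_row_eq hrow, fun μ hμ => le_of_abs_le ?_⟩
  refine Matrix.abs_le_of_mem_spectrum_of_forall_sum_abs_le (fun a => ?_) hμ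
  simp only [distMatrix, Matrix.of_apply, Nat.abs_cast] at hrow ⊢
  exact (hrow a).le

/-- for odd composite `n`, the distance spectral radius (largest eigenvalue of
the distance matrix) of the unitary Cayley graph `X_n` equals `2(n-1) - φ(n)`. -/
theorem unitaryCayley_odd_composite_spectral_radius (n : ℕ) [NeZero n] (hn : 1 < n)
    (hodd : Odd n) (hcomp : ¬ n.Prime) :
    (2 * ((n : ℝ) - 1) - (Nat.totient n : ℝ)) ∈ spectrum ℝ (distMatrix (ICG n {1})) ∧
    ∀ μ ∈ spectrum ℝ (distMatrix (ICG n {1})),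
      μ ≤ 2 * ((n : ℝ) - 1) - (Nat.totient n : ℝ) :=
  unitaryCayley_odd_composite_spectral_radius_general n hn hodd
end
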